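/- arXiv:1305.5856 — 3 statements merged into one kernel-verified Lean document; each statement's English description precedes it below -/
import Mathlib

section
/- For 0 < α < π/2, the Möbius transformation U_α(y) = i·tan(α)·(1 - y)/(1 + y) maps the open cone C_α = {r·e^{it} : r > 0, |t| < α} bijectively onto the lens region Ω_γ where γ = 1/cos(α). -/
open Complex Metric

/-- The open cone of half-angle `α`: {r·e^{it} : r > 0, |t| < α}. -/
def cone (α : ℝ) : Set ℂ :=
  {z : ℂ | ∃ r t : ℝ, 0 < r ∧ |t| < α ∧ z = (r : ℂ) * Complex.exp ((t : ℂ) * I)}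

/-- The open lens region Ω_γ = {s : |1 - s| < γ ∧ |1 + s| < γ}. -/
def lens (γ : ℝ) : Set ℂ := {s : ℂ | ‖1 - s‖ < γ ∧ ‖1 + s‖ < γ}

/-!
With `T = tan α` and `γ² = 1 + T²`, the cone is the sector `|Im y| < T · Re y`. For
`s = iT(1 - y)/(1 + y)` one has the identities
`γ² |1 + y|² - |(1 + y) ∓ iT(1 - y)|² = 4T(T Re y ± Im y)`,
so `|1 ∓ s| < γ` are exactly the two half-plane conditions `∓ Im y < T Re y` cutting out the
sector. The map is a Möbius transformation with inverse `s ↦ (iT - s)/(iT + s)`, defined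
everywhere except at `s = -iT`, which lies on the boundary of the lens.
-/

open Real in
lemma Real.abs_arctan_lt_iff {α x : ℝ} (hα₀ : -(π / 2) < α) (hα : α < π / 2) :
    |arctan x| < α ↔ |x| < tan α := by
  have hlt : arctan x < α ↔ x < tan α := by
    conv_lhs => rw [← arctan_tan hα₀ hα]
    exact arctan_lt_arctan_iff
  have hgt : -α < arctan x ↔ -tan α < x := by
    conv_lhs => rw [← arctan_tan (x := -α) (by linarith) (by linarith), tan_neg]
    exact arctan_lt_arctan_iff
  rw [abs_lt, abs_lt, hlt, hgt]

lemma Complex.arg_eq_arctan_of_re_pos {z : ℂ} (hz : 0 < z.re) :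
    arg z = Real.arctan (z.im / z.re) := by
  have h := abs_lt.mp (abs_arg_lt_pi_div_two_iff.mpr (Or.inl hz))
  rw [← tan_arg, Real.arctan_tan h.1 h.2]

lemma re_pos_of_abs_im_lt {T : ℝ} {z : ℂ} (hT : 0 ≤ T) (h : |z.im| < T * z.re) : 0 < z.re :=
  pos_of_mul_pos_right ((abs_nonneg _).trans_lt h) hT

lemma mem_cone_iff {α : ℝ} {z : ℂ} : z ∈ cone α ↔ z ≠ 0 ∧ |arg z| < α := by
  constructor
  · rintro ⟨r, t, hr, ht, rfl⟩
    refine ⟨mul_ne_zero (ofReal_ne_zero.mpr hr.ne') (exp_ne_zero _), ?_⟩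
    rw [arg_real_mul _ hr, arg_exp_mul_I]
    by_cases hαπ : α ≤ Real.pi
    · obtain ⟨ht₁, ht₂⟩ := abs_lt.mp ht
      rwa [(toIocMod_eq_self _).mpr ⟨by linarith, by linarith⟩]
    · exact (abs_le.mpr ⟨(toIocMod_mem_Ioc _ _ t).1.le, by
        linarith [(toIocMod_mem_Ioc Real.two_pi_pos (-Real.pi) t).2]⟩).trans_lt (not_le.mp hαπ)
  · rintro ⟨hz, hα⟩
    exact ⟨‖z‖, arg z, norm_pos_iff.mpr hz, hα, (norm_mul_exp_arg_mul_I z).symm⟩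

lemma cone_eq_setOf_abs_im_lt {α : ℝ} (hα₀ : 0 < α) (hα : α < Real.pi / 2) :
    cone α = {z : ℂ | |z.im| < Real.tan α * z.re} := by
  have hT : 0 < Real.tan α := Real.tan_pos_of_pos_of_lt_pi_div_two hα₀ hα
  ext z
  rw [mem_cone_iff, Set.mem_ofPred_eq]
  suffices key : 0 < z.re → (|arg z| < α ↔ |z.im| < Real.tan α * z.re) by
    constructor
    · rintro ⟨hz, harg⟩
      have hre : 0 < z.re := (abs_arg_lt_pi_div_two_iff.mp (harg.trans hα)).resolve_right hz
      exact (key hre).mp harg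
    · intro h
      have hre := re_pos_of_abs_im_lt hT.le h
      exact ⟨fun hz => by simp [hz] at hre, (key hre).mpr h⟩
  intro hre
  rw [arg_eq_arctan_of_re_pos hre, Real.abs_arctan_lt_iff (by linarith) hα, abs_div,
    abs_of_pos hre, div_lt_iff₀ hre]

lemma norm_div_lt_sqrt_iff {a b : ℂ} {c : ℝ} (hb : b ≠ 0) :
    ‖a / b‖ < √c ↔ normSq a < c * normSq b := by
  rw [Real.lt_sqrt (norm_nonneg _), Complex.sq_norm, normSq_div, div_lt_iff₀ (normSq_pos.mpr hb)]

section Moebius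

variable {T : ℝ}

lemma moebius_mem_lens_iff (hT : 0 < T) {y : ℂ} (hy : 1 + y ≠ 0) :
    I * T * (1 - y) / (1 + y) ∈ lens √(1 + T ^ 2) ↔ |y.im| < T * y.re := by
  have hsub : 1 - I * T * (1 - y) / (1 + y) = ((1 + y) - I * T * (1 - y)) / (1 + y) := by
    field_simp
  have hadd : 1 + I * T * (1 - y) / (1 + y) = ((1 + y) + I * T * (1 - y)) / (1 + y) := by
    field_simp
  have key_sub : (1 + T ^ 2) * normSq (1 + y) - normSq ((1 + y) - I * T * (1 - y)) =
      4 * T * (T * y.re + y.im) := by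
    simp only [normSq_apply, add_re, sub_re, mul_re, add_im, sub_im, mul_im, I_re, I_im, ofReal_re,
      ofReal_im, one_re, one_im]
    ring
  have key_add : (1 + T ^ 2) * normSq (1 + y) - normSq ((1 + y) + I * T * (1 - y)) =
      4 * T * (T * y.re - y.im) := by
    simp only [normSq_apply, add_re, sub_re, mul_re, add_im, sub_im, mul_im, I_re, I_im, ofReal_re,
      ofReal_im, one_re, one_im]
    ring
  simp only [lens, Set.mem_ofPred_eq, hsub, hadd, norm_div_lt_sqrt_iff hy, abs_lt]
  constructor <;> rintro ⟨h₁, h₂⟩ <;> constructor <;> nlinarith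

lemma moebius_injective {a y z : ℂ} (ha : a ≠ 0) (hy : 1 + y ≠ 0) (hz : 1 + z ≠ 0)
    (h : a * (1 - y) / (1 + y) = a * (1 - z) / (1 + z)) : y = z := by
  rw [div_eq_div_iff hy hz] at h
  have hzero : 2 * a * (z - y) = 0 := by linear_combination h
  exact (sub_eq_zero.mp ((mul_eq_zero.mp hzero).resolve_left (by simp [ha]))).symm

lemma exists_moebius_eq {a s : ℂ} (ha : a ≠ 0) (hs : a + s ≠ 0) :
    ∃ y : ℂ, 1 + y ≠ 0 ∧ a * (1 - y) / (1 + y) = s := by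
  have hadd : 1 + (a - s) / (a + s) = 2 * a / (a + s) := by
    field_simp
    ring
  have hsub : 1 - (a - s) / (a + s) = 2 * s / (a + s) := by
    field_simp
    ring
  refine ⟨(a - s) / (a + s), ?_, ?_⟩
  · rw [hadd]
    exact div_ne_zero (mul_ne_zero two_ne_zero ha) hs
  · rw [hadd, hsub]
    field_simp

lemma neg_I_mul_notMem_lens : -(I * T) ∉ lens √(1 + T ^ 2) := by
  rintro ⟨-, h⟩
  have hcoe : (1 : ℂ) + -(I * T) = (1 : ℝ) + (-T : ℝ) * I := by push_cast; ring
  rw [hcoe, norm_add_mul_I, one_pow, neg_sq] at h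
  exact lt_irrefl _ h

lemma bijOn_moebius_lens (hT : 0 < T) :
    Set.BijOn (fun y : ℂ => I * T * (1 - y) / (1 + y))
      {y : ℂ | |y.im| < T * y.re} (lens √(1 + T ^ 2)) := by
  have hy : ∀ {y : ℂ}, |y.im| < T * y.re → 1 + y ≠ 0 := fun h => ne_of_apply_ne re <| by
    rw [add_re, one_re, zero_re]
    linarith [re_pos_of_abs_im_lt hT.le h]
  have hIT : (I * T : ℂ) ≠ 0 := by simp [hT.ne']
  refine ⟨fun y h => (moebius_mem_lens_iff hT (hy h)).mpr h,
    fun a ha b hb => moebius_injective hIT (hy ha) (hy hb), fun s hs => ?_⟩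
  have hs' : I * T + s ≠ 0 := fun h =>
    neg_I_mul_notMem_lens (by rwa [← eq_neg_of_add_eq_zero_right h])
  obtain ⟨y, hy1, rfl⟩ := exists_moebius_eq hIT hs'
  exact ⟨y, (moebius_mem_lens_iff hT hy1).mp hs, rfl⟩

end Moebius

theorem moebius_cone_to_lens (α : ℝ) (hα : 0 < α) (hα' : α < Real.pi / 2) :
    Set.BijOn (fun y : ℂ => I * (Real.tan α : ℂ) * (1 - y) / (1 + y))
      (cone α) (lens (1 / Real.cos α)) := by
  have hcos : 0 < Real.cos α := Real.cos_pos_of_mem_Ioo ⟨by linarith, hα'⟩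
  rw [cone_eq_setOf_abs_im_lt hα hα', ← Real.inv_sqrt_one_add_tan_sq hcos, one_div, inv_inv]
  exact bijOn_moebius_lens (Real.tan_pos_of_pos_of_lt_pi_div_two hα hα')
end

section
/- For 0 < α < π/2 and γ = 1/cos(α), the function F_γ(w) = i·tan(α)·(1 - ((1+iw)/(1-iw))^{2α/π})/(1 + ((1+iw)/(1-iw))^{2α/π}) is a holomorphic bijection from the open unit disc 𝔻 onto the lens region Ω_γ. -/
/-!
`Fmap α` is a composite of three conformal maps. The Cayley map `w ↦ (1 + iw)/(1 - iw)` takes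
the disc onto the right half-plane `{|arg z| < π/2}`; the principal power `z ↦ z ^ (2α/π)`
takes it onto the sector `{|arg u| < α}`, which is the wedge `|Im u| < t Re u` for `t = tan α`;
and the Möbius map `u ↦ it(1 - u)/(1 + u)` sends the two half-planes bounding this wedge onto
the two discs `|1 ∓ s| < √(1 + t²) = 1/cos α` whose intersection is the lens.
-/

open Complex Metric

/-- The conformal map F_γ (with cos α = 1/γ) of the unit disc onto the lens Ω_γ. -/
noncomputable def Fmap (α : ℝ) (w : ℂ) : ℂ :=
  I * (Real.tan α : ℂ) *
    (1 - ((1 + I * w) / (1 - I * w)) ^ ((2 * α / Real.pi : ℝ) : ℂ)) /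
    (1 + ((1 + I * w) / (1 - I * w)) ^ ((2 * α / Real.pi : ℝ) : ℂ))

open Set
open scoped Real

noncomputable def cayley (w : ℂ) : ℂ := (1 + I * w) / (1 - I * w)

noncomputable def cayleyInv (z : ℂ) : ℂ := (z - 1) / (I * (1 + z))

lemma one_sub_I_mul_ne_zero {w : ℂ} (hw : ‖w‖ < 1) : 1 - I * w ≠ 0 := by
  intro h
  have : ‖w‖ = 1 := by simpa using congr_arg norm (sub_eq_zero.1 h).symm
  linarith

lemma cayley_re (w : ℂ) : (cayley w).re = (1 - normSq w) / normSq (1 - I * w) := by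
  simp only [cayley, div_re, normSq_apply, add_re, add_im, sub_re, sub_im, mul_re, mul_im, one_re,
    one_im, I_re, I_im]
  ring

lemma mapsTo_cayley : MapsTo cayley (ball 0 1) {z | 0 < z.re} := by
  intro w hw
  rw [mem_ball_zero_iff] at hw
  have hw' : normSq w < 1 := by rw [normSq_eq_norm_sq]; nlinarith [norm_nonneg w]
  rw [mem_ofPred_eq, cayley_re]
  exact div_pos (by linarith) (normSq_pos.2 (one_sub_I_mul_ne_zero hw))

lemma norm_sub_one_lt_norm_one_add {z : ℂ} (hz : 0 < z.re) : ‖z - 1‖ < ‖1 + z‖ := by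
  rw [← sq_lt_sq₀ (norm_nonneg _) (norm_nonneg _), Complex.sq_norm, Complex.sq_norm,
    normSq_apply, normSq_apply]
  simp only [sub_re, sub_im, add_re, add_im, one_re, one_im]
  nlinarith

lemma mapsTo_cayleyInv : MapsTo cayleyInv {z | 0 < z.re} (ball 0 1) := by
  intro z hz
  have hz1 : ‖z - 1‖ < ‖1 + z‖ := norm_sub_one_lt_norm_one_add hz
  rw [mem_ball_zero_iff, cayleyInv, norm_div, norm_mul, norm_I, one_mul,
    div_lt_one ((norm_nonneg _).trans_lt hz1)]
  exact hz1

lemma cayleyInv_cayley {w : ℂ} (hw : 1 - I * w ≠ 0) : cayleyInv (cayley w) = w := by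
  rw [cayleyInv, cayley]
  field_simp
  ring

lemma cayley_cayleyInv {z : ℂ} (hz : 1 + z ≠ 0) : cayley (cayleyInv z) = z := by
  rw [cayley, cayleyInv]
  field_simp
  ring

lemma one_add_ne_zero_of_re_pos {z : ℂ} (hz : 0 < z.re) : 1 + z ≠ 0 := by
  intro h
  have := congr_arg re h
  simp only [add_re, one_re, zero_re] at this
  linarith

lemma bijOn_cayley : BijOn cayley (ball 0 1) {z | 0 < z.re} :=
  InvOn.bijOn
    ⟨fun _ hw => cayleyInv_cayley (one_sub_I_mul_ne_zero (mem_ball_zero_iff.1 hw)),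
      fun _ hz => cayley_cayleyInv (one_add_ne_zero_of_re_pos hz)⟩
    mapsTo_cayley mapsTo_cayleyInv

lemma differentiableOn_cayley : DifferentiableOn ℂ cayley (ball 0 1) :=
  DifferentiableOn.div (by fun_prop) (by fun_prop)
    fun _ hw => one_sub_I_mul_ne_zero (mem_ball_zero_iff.1 hw)

-- `arg 0 = 0`, so `0` has to be excluded by hand.
def sector (θ : ℝ) : Set ℂ := {z | z ≠ 0 ∧ |arg z| < θ}

lemma sector_pi_div_two : sector (π / 2) = {z | 0 < z.re} := by
  ext z
  simp only [sector, mem_ofPred_eq, abs_arg_lt_pi_div_two_iff]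
  constructor
  · rintro ⟨hz, h | h⟩
    exacts [h, absurd h hz]
  · intro hz
    exact ⟨fun h => by simp [h] at hz, Or.inl hz⟩

lemma log_mul_ofReal_im (z : ℂ) (b : ℝ) : (log z * b).im = b * arg z := by
  simp [log_im, mul_comm]

lemma arg_cpow_ofReal {z : ℂ} (hz : z ≠ 0) {b : ℝ} (h₁ : -π < b * arg z)
    (h₂ : b * arg z ≤ π) :
    arg (z ^ (b : ℂ)) = b * arg z := by
  rw [cpow_def_of_ne_zero hz, arg_exp, log_mul_ofReal_im, toIocMod_eq_self]
  exact ⟨h₁, by linarith⟩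

lemma cpow_ofReal_cpow_inv {z : ℂ} {b : ℝ} (hb : b ≠ 0) (h₁ : -π < b * arg z)
    (h₂ : b * arg z ≤ π) : (z ^ (b : ℂ)) ^ ((b⁻¹ : ℝ) : ℂ) = z := by
  rw [← cpow_mul _ (by rwa [log_mul_ofReal_im]) (by rwa [log_mul_ofReal_im]), ← ofReal_mul,
    mul_inv_cancel₀ hb, ofReal_one, cpow_one]

lemma abs_mul_arg_lt_of_mem_sector {z : ℂ} {b θ : ℝ} (hb : 0 < b) (hz : z ∈ sector θ) :
    |b * arg z| < b * θ := by
  rw [abs_mul, abs_of_pos hb]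
  exact mul_lt_mul_of_pos_left hz.2 hb

lemma mapsTo_cpow_sector {b θ : ℝ} (hb : 0 < b) (h : b * θ ≤ π) :
    MapsTo (fun z : ℂ => z ^ (b : ℂ)) (sector θ) (sector (b * θ)) := by
  intro z hz
  obtain ⟨h₁, h₂⟩ := abs_lt.1 ((abs_mul_arg_lt_of_mem_sector hb hz).trans_le h)
  refine ⟨by simp [cpow_eq_zero_iff, hz.1], ?_⟩
  rw [arg_cpow_ofReal hz.1 h₁ h₂.le]
  exact abs_mul_arg_lt_of_mem_sector hb hz

lemma bijOn_cpow_sector {b θ : ℝ} (hb : 0 < b) (hθ : θ ≤ π) (h : b * θ ≤ π) :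
    BijOn (fun z : ℂ => z ^ (b : ℂ)) (sector θ) (sector (b * θ)) := by
  have hθ' : b⁻¹ * (b * θ) = θ := inv_mul_cancel_left₀ hb.ne' θ
  have hinv := mapsTo_cpow_sector (θ := b * θ) (inv_pos.2 hb) (hθ'.trans_le hθ)
  rw [hθ'] at hinv
  refine InvOn.bijOn ⟨fun z hz => ?_, fun z hz => ?_⟩ (mapsTo_cpow_sector hb h) hinv
  · obtain ⟨h₁, h₂⟩ := abs_lt.1 ((abs_mul_arg_lt_of_mem_sector hb hz).trans_le h)
    exact cpow_ofReal_cpow_inv hb.ne' h₁ h₂.le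
  · have hlt := abs_mul_arg_lt_of_mem_sector (inv_pos.2 hb) hz
    rw [hθ'] at hlt
    obtain ⟨h₁, h₂⟩ := abs_lt.1 (hlt.trans_le hθ)
    simpa only [inv_inv] using cpow_ofReal_cpow_inv (inv_ne_zero hb.ne') h₁ h₂.le

lemma differentiableOn_cpow_ofReal_rightHalfPlane (b : ℝ) :
    DifferentiableOn ℂ (fun z : ℂ => z ^ (b : ℂ)) {z | 0 < z.re} :=
  differentiableOn_id.cpow_const fun _ hz => Or.inl hz

def wedge (t : ℝ) : Set ℂ := {u | |u.im| < t * u.re}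

lemma re_pos_of_mem_wedge {t : ℝ} (ht : 0 ≤ t) {u : ℂ} (hu : u ∈ wedge t) : 0 < u.re :=
  pos_of_mul_pos_right ((abs_nonneg _).trans_lt hu) ht

lemma abs_lt_iff_abs_tan_lt {x α : ℝ} (hx : |x| < π / 2) (hα : 0 ≤ α) (hα' : α < π / 2) :
    |x| < α ↔ |Real.tan x| < Real.tan α := by
  have htan_abs : |Real.tan x| = Real.tan |x| := by
    rcases abs_cases x with ⟨hx', hx0⟩ | ⟨hx', hx0⟩
    · rw [hx', abs_of_nonneg (Real.tan_nonneg_of_nonneg_of_le_pi_div_two hx0 (by linarith))]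
    · rw [hx', Real.tan_neg, abs_of_neg (Real.tan_neg_of_neg_of_pi_div_two_lt hx0 (by linarith))]
  rw [htan_abs]
  exact (Real.strictMonoOn_tan.lt_iff_lt ⟨by linarith [abs_nonneg x], hx⟩
    ⟨by linarith [Real.pi_pos], hα'⟩).symm

lemma sector_eq_wedge {α : ℝ} (hα : 0 ≤ α) (hα' : α < π / 2) :
    sector α = wedge (Real.tan α) := by
  have key (u : ℂ) (hre : 0 < u.re) : |arg u| < α ↔ u ∈ wedge (Real.tan α) := by
    rw [abs_lt_iff_abs_tan_lt (abs_arg_lt_pi_div_two_iff.2 (Or.inl hre)) hα hα', tan_arg,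
      abs_div, abs_of_pos hre, div_lt_iff₀ hre]
    rfl
  ext u
  constructor
  · rintro ⟨hu, harg⟩
    exact (key u ((abs_arg_lt_pi_div_two_iff.1 (harg.trans hα')).resolve_right hu)).1 harg
  · intro hu
    have hre := re_pos_of_mem_wedge (Real.tan_nonneg_of_nonneg_of_le_pi_div_two hα hα'.le) hu
    exact ⟨fun h => by simp [h] at hre, (key u hre).2 hu⟩

noncomputable def lensMobius (t : ℝ) (u : ℂ) : ℂ := I * t * (1 - u) / (1 + u)

noncomputable def lensMobiusInv (t : ℝ) (s : ℂ) : ℂ := (I * t - s) / (I * t + s)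

lemma mem_lens_lensMobius_iff {t : ℝ} (ht : 0 < t) {u : ℂ} (hu : 1 + u ≠ 0) :
    lensMobius t u ∈ lens √(1 + t ^ 2) ↔ u ∈ wedge t := by
  have e₁ : 1 - lensMobius t u = ((1 + u) - I * t * (1 - u)) / (1 + u) := by
    rw [lensMobius]; field_simp
  have e₂ : 1 + lensMobius t u = ((1 + u) + I * t * (1 - u)) / (1 + u) := by
    rw [lensMobius]; field_simp
  have n₁ : normSq ((1 + u) - I * t * (1 - u)) =
      (1 + t ^ 2) * normSq (1 + u) - 4 * t * (t * u.re + u.im) := by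
    simp only [normSq_apply, add_re, add_im, sub_re, sub_im, mul_re, mul_im, one_re, one_im,
      I_re, I_im, ofReal_re, ofReal_im]
    ring
  have n₂ : normSq ((1 + u) + I * t * (1 - u)) =
      (1 + t ^ 2) * normSq (1 + u) - 4 * t * (t * u.re - u.im) := by
    simp only [normSq_apply, add_re, add_im, sub_re, sub_im, mul_re, mul_im, one_re, one_im,
      I_re, I_im, ofReal_re, ofReal_im]
    ring
  simp only [lens, wedge, mem_ofPred_eq, Real.lt_sqrt (norm_nonneg _), Complex.sq_norm, e₁, e₂,
    map_div₀, div_lt_iff₀ (normSq_pos.2 hu), n₁, n₂, sub_lt_self_iff,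
    mul_pos_iff_of_pos_left (by positivity : (0 : ℝ) < 4 * t), abs_lt]
  constructor <;> rintro ⟨h₁, h₂⟩ <;> constructor <;> linarith

lemma one_add_ne_zero_of_mem_wedge {t : ℝ} (ht : 0 ≤ t) {u : ℂ} (hu : u ∈ wedge t) :
    1 + u ≠ 0 :=
  one_add_ne_zero_of_re_pos (re_pos_of_mem_wedge ht hu)

lemma mapsTo_lensMobius {t : ℝ} (ht : 0 < t) :
    MapsTo (lensMobius t) (wedge t) (lens √(1 + t ^ 2)) :=
  fun _ hu => (mem_lens_lensMobius_iff ht (one_add_ne_zero_of_mem_wedge ht.le hu)).2 hu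

lemma I_mul_add_ne_zero_of_mem_lens {t : ℝ} {s : ℂ} (hs : s ∈ lens √(1 + t ^ 2)) :
    I * t + s ≠ 0 := by
  intro h
  have h₁ := hs.2
  rw [eq_neg_of_add_eq_zero_right h, Real.lt_sqrt (norm_nonneg _), Complex.sq_norm] at h₁
  simp [normSq_apply, sq] at h₁

lemma lensMobius_lensMobiusInv {t : ℝ} (ht : t ≠ 0) {s : ℂ} (hs : I * t + s ≠ 0) :
    lensMobius t (lensMobiusInv t s) = s := by
  have ht' : (t : ℂ) ≠ 0 := ofReal_ne_zero.2 ht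
  rw [lensMobius, lensMobiusInv]
  field_simp
  ring

lemma lensMobiusInv_lensMobius {t : ℝ} (ht : t ≠ 0) {u : ℂ} (hu : 1 + u ≠ 0) :
    lensMobiusInv t (lensMobius t u) = u := by
  have ht' : (t : ℂ) ≠ 0 := ofReal_ne_zero.2 ht
  rw [lensMobius, lensMobiusInv]
  field_simp
  ring

lemma bijOn_lensMobius {t : ℝ} (ht : 0 < t) :
    BijOn (lensMobius t) (wedge t) (lens √(1 + t ^ 2)) := by
  have hinv : MapsTo (lensMobiusInv t) (lens √(1 + t ^ 2)) (wedge t) := by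
    intro s hs
    have hs' := I_mul_add_ne_zero_of_mem_lens hs
    have h₁ : 1 + lensMobiusInv t s ≠ 0 := by
      rw [lensMobiusInv, one_add_div hs', add_add_sub_cancel, ← two_mul]
      exact div_ne_zero (by simp [ht.ne']) hs'
    rw [← mem_lens_lensMobius_iff ht h₁, lensMobius_lensMobiusInv ht.ne' hs']
    exact hs
  exact InvOn.bijOn
    ⟨fun _ hu => lensMobiusInv_lensMobius ht.ne' (one_add_ne_zero_of_mem_wedge ht.le hu),
      fun _ hs => lensMobius_lensMobiusInv ht.ne' (I_mul_add_ne_zero_of_mem_lens hs)⟩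
    (mapsTo_lensMobius ht) hinv

lemma differentiableOn_lensMobius (t : ℝ) :
    DifferentiableOn ℂ (lensMobius t) {u | 1 + u ≠ 0} :=
  DifferentiableOn.div (by fun_prop) (by fun_prop) fun _ hu => hu

theorem Fmap_holomorphic_bijection (α : ℝ) (hα : 0 < α) (hα' : α < Real.pi / 2) :
    DifferentiableOn ℂ (Fmap α) (ball (0 : ℂ) 1) ∧
    Set.BijOn (Fmap α) (ball (0 : ℂ) 1) (lens (1 / Real.cos α)) := by
  have htan : 0 < Real.tan α := Real.tan_pos_of_pos_of_lt_pi_div_two hα hα'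
  have hγ : 1 / Real.cos α = √(1 + Real.tan α ^ 2) := by
    rw [one_div, ← Real.inv_sqrt_one_add_tan_sq
      (Real.cos_pos_of_mem_Ioo ⟨by linarith [Real.pi_pos], hα'⟩), inv_inv]
  have hexp : 2 * α / π * (π / 2) = α := by field_simp
  have hpow : BijOn (fun z : ℂ => z ^ ((2 * α / π : ℝ) : ℂ)) {z | 0 < z.re}
      (wedge (Real.tan α)) := by
    have h := bijOn_cpow_sector (b := 2 * α / π) (θ := π / 2) (by positivity)
      (by linarith [Real.pi_pos]) (by linarith)
    rwa [sector_pi_div_two, hexp, sector_eq_wedge hα.le hα'] at h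
  have hF : Fmap α =
      lensMobius (Real.tan α) ∘ (fun z : ℂ => z ^ ((2 * α / π : ℝ) : ℂ)) ∘ cayley := rfl
  rw [hF, hγ]
  refine ⟨?_, (bijOn_lensMobius htan).comp (hpow.comp bijOn_cayley)⟩
  exact ((differentiableOn_lensMobius _).comp (differentiableOn_cpow_ofReal_rightHalfPlane _)
    fun _ hz => one_add_ne_zero_of_mem_wedge htan.le (hpow.mapsTo hz)).comp
    differentiableOn_cayley bijOn_cayley.mapsTo
end

section
/- For 0 < α < π/2 and γ = 1/cos(α), the conformal map F_γ of the unit disc onto Ω_γ satisfies F_γ(0) = 0 and F_γ'(0) = 2α·tan(α)/π. -/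
open Complex Metric

/-! At `w = 0` the Möbius factor `V` equals `1`, where the principal power `V ^ c` is
holomorphic with derivative `c • V'`, and `s ↦ (1 - s) / (1 + s)` has derivative `-1/2` at
`s = 1`. Since `V'(0) = 2i`, the chain rule gives `F'(0) = i tan α · (-(2i c) / 2) = c tan α`
with `c = 2α/π`. -/

lemma cayley_zero : (1 + I * 0) / (1 - I * 0) = 1 := by norm_num

lemma hasDerivAt_cayley {w : ℂ} (hw : 1 - I * w ≠ 0) :
    HasDerivAt (fun w : ℂ => (1 + I * w) / (1 - I * w)) (2 * I / (1 - I * w) ^ 2) w := by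
  have hnum : HasDerivAt (fun w : ℂ => 1 + I * w) I w := by
    simpa using ((hasDerivAt_id w).const_mul I).const_add 1
  have hden : HasDerivAt (fun w : ℂ => 1 - I * w) (-I) w := by
    simpa using ((hasDerivAt_id w).const_mul I).const_sub 1
  exact (hnum.div hden hw).congr_deriv (by ring)

section

variable {f : ℂ → ℂ} {f' z : ℂ}

lemma HasDerivAt.cpow_const_of_eq_one (hf : HasDerivAt f f' z) (hz : f z = 1) (c : ℂ) :
    HasDerivAt (fun w => f w ^ c) (c * f') z := by
  have h := hf.cpow_const (c := c) (by rw [hz]; exact Or.inl zero_lt_one)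
  rwa [hz, one_cpow, mul_one] at h

lemma HasDerivAt.one_sub_div_one_add_of_eq_one (hf : HasDerivAt f f' z) (hz : f z = 1) :
    HasDerivAt (fun w => (1 - f w) / (1 + f w)) (-f' / 2) z := by
  have h := (hf.const_sub 1).div (hf.const_add 1) (by rw [hz]; norm_num)
  rw [hz] at h
  exact h.congr_deriv (by ring)

end

theorem Fmap_zero_and_deriv_general (α : ℝ) :
    Fmap α 0 = 0 ∧ deriv (Fmap α) 0 = ((2 * α * Real.tan α / Real.pi : ℝ) : ℂ) := by
  have hV : HasDerivAt (fun w : ℂ => (1 + I * w) / (1 - I * w)) (2 * I) 0 := by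
    simpa using hasDerivAt_cayley (w := 0) (by simp)
  have hpow := hV.cpow_const_of_eq_one cayley_zero ((2 * α / Real.pi : ℝ) : ℂ)
  have hpow_zero : ((1 + I * 0) / (1 - I * 0)) ^ ((2 * α / Real.pi : ℝ) : ℂ) = 1 := by
    rw [cayley_zero, one_cpow]
  have hF : HasDerivAt (Fmap α) (Real.tan α * ((2 * α / Real.pi : ℝ) : ℂ)) 0 := by
    have h := (hpow.one_sub_div_one_add_of_eq_one hpow_zero).const_mul (I * (Real.tan α : ℂ))
    refine (h.congr_deriv ?_).congr_of_eventuallyEq (.of_forall fun w => ?_)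
    · linear_combination (-(Real.tan α : ℂ) * ((2 * α / Real.pi : ℝ) : ℂ)) * I_mul_I
    · rw [Fmap, mul_div_assoc]
  refine ⟨by simp [Fmap], ?_⟩
  rw [hF.deriv]
  push_cast
  ring

theorem Fmap_zero_and_deriv (α : ℝ) (hα : 0 < α) (hα' : α < Real.pi / 2) :
    Fmap α 0 = 0 ∧ deriv (Fmap α) 0 = ((2 * α * Real.tan α / Real.pi : ℝ) : ℂ) :=
  Fmap_zero_and_deriv_general α
end
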